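/- Define the ERC operator on ℝⁿ by T_ERC(Q) = r_erc(Q) + γ P Q, where r_erc(Q) = r + (β/(1+β))·m(Q − (r + γPQ))·e, with m(v) = (1/n)Σᵢ vᵢ the coordinate mean and e the all-ones vector. Then T_ERC is a contraction in the sup-norm with modulus at most γ + β/(1+β)·(1+γ) provided γ + (β/(1+β))(1+γ) < 1. -/
import Mathlib


/-- The ERC operator `T_ERC(Q) = r_erc(Q) + γ P Q`, with
`r_erc(Q) = r + (β/(1+β)) · m(Q - (r + γPQ)) · e` and `m` the coordinate mean, is a
contraction in the sup-norm with modulus at most `γ + (β/(1+β))(1+γ)`, provided this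
quantity is `< 1`. (The sup-norm on `Fin n → ℝ` is the default norm.) -/
theorem stmt_11 {n : ℕ} (hn : 0 < n) (P : Matrix (Fin n) (Fin n) ℝ)
    (hpos : ∀ i j, 0 ≤ P i j) (hrow : ∀ i, ∑ j, P i j = 1)
    (r : Fin n → ℝ) (γ β : ℝ) (hγ0 : 0 ≤ γ) (hγ1 : γ < 1) (hβ : 0 ≤ β)
    (m : (Fin n → ℝ) → ℝ) (hm : ∀ v, m v = (1 / (n : ℝ)) * ∑ i, v i)
    (T : (Fin n → ℝ) → (Fin n → ℝ))
    (hT : ∀ Q, T Q =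
      (r + ((β / (1 + β)) * m (Q - (r + γ • P.mulVec Q))) • (fun _ => (1 : ℝ)))
        + γ • P.mulVec Q)
    (hmod : γ + (β / (1 + β)) * (1 + γ) < 1) :
    ∀ Q₁ Q₂ : Fin n → ℝ,
      ‖T Q₁ - T Q₂‖ ≤ (γ + (β / (1 + β)) * (1 + γ)) * ‖Q₁ - Q₂‖ := by
  intro Q₁ Q₂
  haveI : Nonempty (Fin n) := ⟨⟨0, hn⟩⟩
  set c := β / (1 + β) with hc
  have hc0 : (0:ℝ) ≤ c := div_nonneg hβ (by linarith)
  have hn' : (0:ℝ) < n := by exact_mod_cast hn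
  -- |m v| ≤ ‖v‖
  have hmb : ∀ v : Fin n → ℝ, |m v| ≤ ‖v‖ := by
    intro v
    rw [hm]
    have h1 : |∑ i, v i| ≤ ∑ i, |v i| := Finset.abs_sum_le_sum_abs _ _
    have h2 : ∑ i, |v i| ≤ ∑ _i : Fin n, ‖v‖ := by
      apply Finset.sum_le_sum
      intro i _
      exact (Real.norm_eq_abs (v i)) ▸ norm_le_pi_norm v i
    rw [Finset.sum_const, Finset.card_univ, Fintype.card_fin, nsmul_eq_mul] at h2
    rw [abs_mul, abs_of_nonneg (by positivity : (0:ℝ) ≤ 1/(n:ℝ))]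
    calc 1/(n:ℝ) * |∑ i, v i| ≤ 1/(n:ℝ) * ((n:ℝ) * ‖v‖) := by
          have := le_trans h1 h2
          gcongr
      _ = ‖v‖ := by field_simp
  -- ‖P v‖ ≤ ‖v‖
  have hPv : ∀ v : Fin n → ℝ, ‖P.mulVec v‖ ≤ ‖v‖ := by
    intro v
    rw [pi_norm_le_iff_of_nonneg (norm_nonneg v)]
    intro i
    rw [Real.norm_eq_abs]
    have hb : |P.mulVec v i| ≤ ∑ j, P i j * ‖v‖ := by
      rw [Matrix.mulVec, dotProduct]
      refine le_trans (Finset.abs_sum_le_sum_abs _ _) ?_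
      apply Finset.sum_le_sum
      intro j _
      rw [abs_mul, abs_of_nonneg (hpos i j)]
      exact mul_le_mul_of_nonneg_left
        ((Real.norm_eq_abs (v j)) ▸ norm_le_pi_norm v j) (hpos i j)
    calc |P.mulVec v i| ≤ ∑ j, P i j * ‖v‖ := hb
      _ = ‖v‖ := by rw [← Finset.sum_mul, hrow, one_mul]
  set d := Q₁ - Q₂ with hd
  set Pd := P.mulVec d with hPdd
  have hPdlin : Pd = P.mulVec Q₁ - P.mulVec Q₂ := by
    rw [hPdd, hd, Matrix.mulVec_sub]
  have hmdiff : m (Q₁ - (r + γ • P.mulVec Q₁)) - m (Q₂ - (r + γ • P.mulVec Q₂))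
      = m (d - γ • Pd) := by
    rw [hm, hm, hm, ← mul_sub, ← Finset.sum_sub_distrib]
    congr 1
    apply Finset.sum_congr rfl
    intro i _
    simp only [Pi.sub_apply, Pi.add_apply, Pi.smul_apply, smul_eq_mul, hd, hPdlin]
    ring
  have key : T Q₁ - T Q₂ = (c * m (d - γ • Pd)) • (fun _ => (1:ℝ)) + γ • Pd := by
    rw [hT, hT]
    funext i
    have := hmdiff
    simp only [Pi.add_apply, Pi.sub_apply, Pi.smul_apply, smul_eq_mul, mul_one,
      hPdlin] at *
    nlinarith [this]
  have he : ‖(fun _ : Fin n => (1:ℝ))‖ = 1 := by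
    rw [pi_norm_const (1:ℝ), norm_one]
  have hbound : ‖T Q₁ - T Q₂‖ ≤ c * ((1 + γ) * ‖d‖) + γ * ‖d‖ := by
    rw [key]
    refine le_trans (norm_add_le _ _) ?_
    have h1 : ‖(c * m (d - γ • Pd)) • (fun _ : Fin n => (1:ℝ))‖ ≤ c * ((1 + γ) * ‖d‖) := by
      rw [norm_smul, he, mul_one, Real.norm_eq_abs, abs_mul, abs_of_nonneg hc0]
      have hmd : |m (d - γ • Pd)| ≤ (1 + γ) * ‖d‖ := by
        refine le_trans (hmb _) ?_
        refine le_trans (norm_sub_le _ _) ?_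
        rw [norm_smul, Real.norm_eq_abs, abs_of_nonneg hγ0]
        have := hPv d
        nlinarith
      exact mul_le_mul_of_nonneg_left hmd hc0
    have h2 : ‖γ • Pd‖ ≤ γ * ‖d‖ := by
      rw [norm_smul, Real.norm_eq_abs, abs_of_nonneg hγ0]
      exact mul_le_mul_of_nonneg_left (hPv d) hγ0
    linarith
  calc ‖T Q₁ - T Q₂‖ ≤ c * ((1 + γ) * ‖d‖) + γ * ‖d‖ := hbound
    _ = (γ + c * (1 + γ)) * ‖d‖ := by ring
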